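/- Let $f \in C(S^n, \mathbb{R})$ be such that for every closed half space $H = \{x : x\cdot u \ge 0\}$ (with $u$ a unit vector) and every $x, y \in S^n \cap H$, one has $(f(x) - f(Rx))(f(y) - f(Ry)) \ge 0$, where $R$ is the reflection with respect to $\partial H$. Then $f$ is radial symmetric and decreasing with respect to some point of $S^n$. -/

import Mathlib

/-!
Let `c` be the centre of mass of `f` on the sphere. For a unit vector `u` with reflection `R`,
the hypothesis says that `f - f ∘ R` has a constant sign on the half sphere `{x · u ≥ 0}`. If
`f ≤ f ∘ R` there, strictly somewhere, then substituting `y ↦ R y` in the integral defining `c`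
shows `c · u < 0`. So `c · u ≥ 0` forces `f ∘ R ≤ f` on the half sphere. For `x, y` on the sphere
with `y · c ≤ x · c`, the reflection in `(x - y)ᗮ` swaps `x` and `y` and `(x - y) · c ≥ 0`, hence
`f y ≤ f x`: `f` is a monotone function of `x · c`.
-/

open Metric Set
open scoped RealInnerProductSpace

noncomputable section

open MeasureTheory Filter Topology Submodule NormedSpace

theorem setIntegral_pos_of_continuousAt {X : Type*} [TopologicalSpace X] [MeasurableSpace X]
    {μ : Measure X} [μ.IsOpenPosMeasure] {s : Set X} {F : X → ℝ} {x : X}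
    (hs : MeasurableSet s) (hFi : IntegrableOn F s μ) (hF : ∀ y ∈ s, 0 ≤ F y)
    (hsx : s ∈ 𝓝 x) (hFx : ContinuousAt F x) (hx : 0 < F x) : 0 < ∫ y in s, F y ∂μ := by
  rw [setIntegral_pos_iff_support_of_nonneg_ae ((ae_restrict_iff' hs).2 (ae_of_all _ hF)) hFi]
  exact Measure.measure_pos_of_mem_nhds μ (inter_mem (hFx.eventually_ne hx.ne') hsx)

theorem exists_monotoneOn_comp_eq {α : Type*} {s : Set α} {f g : α → ℝ} {a : ℝ}
    (hbdd : BddAbove (f '' s)) (hmono : ∀ x ∈ s, ∀ y ∈ s, g y ≤ g x → f y ≤ f x)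
    (ha : a ∈ g '' s) :
    ∃ φ : ℝ → ℝ, MonotoneOn φ (Ici a) ∧ ∀ x ∈ s, f x = φ (g x) := by
  obtain ⟨x₀, hx₀, rfl⟩ := ha
  have hsub : ∀ t, f '' {x ∈ s | g x ≤ t} ⊆ f '' s := fun t => image_mono (sep_subset _ _)
  refine ⟨fun t => sSup (f '' {x ∈ s | g x ≤ t}), fun t ht t' _ htt' => ?_, fun x hx => ?_⟩
  · exact csSup_le_csSup (hbdd.mono (hsub t')) ⟨f x₀, x₀, ⟨hx₀, ht⟩, rfl⟩
      (image_mono fun y hy => ⟨hy.1, hy.2.trans htt'⟩)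
  · refine le_antisymm (le_csSup (hbdd.mono (hsub _)) ⟨x, ⟨hx, le_rfl⟩, rfl⟩) ?_
    refine csSup_le ⟨f x, x, ⟨hx, le_rfl⟩, rfl⟩ ?_
    rintro _ ⟨y, ⟨hy, hyx⟩, rfl⟩
    exact hmono x hx y hy hyx

variable {E : Type*} [NormedAddCommGroup E]

section Shell

variable (E) in
def shell : Set E := closedBall 0 1 \ ball 0 2⁻¹

theorem measurableSet_shell [MeasurableSpace E] [OpensMeasurableSpace E] :
    MeasurableSet (shell E) :=
  measurableSet_closedBall.diff measurableSet_ball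

theorem ne_zero_of_mem_shell {y : E} (hy : y ∈ shell E) : y ≠ 0 := by
  rintro rfl
  exact hy.2 (mem_ball_self (by norm_num))

theorem shell_mem_nhds {y : E} (h₁ : 2⁻¹ < ‖y‖) (h₂ : ‖y‖ < 1) : shell E ∈ 𝓝 y := by
  refine mem_of_superset (inter_mem ((isOpen_lt continuous_const continuous_norm).mem_nhds h₁)
    ((isOpen_lt continuous_norm continuous_const).mem_nhds h₂)) ?_
  rintro z ⟨hz₁, hz₂⟩
  simp only [shell, Set.mem_sdiff, mem_closedBall_zero_iff, mem_ball_zero_iff, not_lt]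
  exact ⟨hz₂.le, hz₁.le⟩

theorem ContinuousOn.integrableOn_shell [ProperSpace E] [MeasurableSpace E]
    [OpensMeasurableSpace E] {μ : Measure E} [IsFiniteMeasureOnCompacts μ] {F : Type*}
    [NormedAddCommGroup F] {g : E → F} (hg : ContinuousOn g {0}ᶜ) : IntegrableOn g (shell E) μ :=
  (hg.mono fun _ => ne_zero_of_mem_shell).integrableOn_compact
    ((isCompact_closedBall 0 1).diff isOpen_ball)

variable [NormedSpace ℝ E]

theorem LinearIsometryEquiv.preimage_shell (e : E ≃ₗᵢ[ℝ] E) : e ⁻¹' shell E = shell E := by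
  ext y
  simp [shell]

theorem LinearIsometryEquiv.normalize_map (e : E ≃ₗᵢ[ℝ] E) (x : E) :
    normalize (e x) = e (normalize x) := by
  rw [NormedSpace.normalize, NormedSpace.normalize, e.norm_map, e.map_smul]

theorem continuousOn_normalize : ContinuousOn (normalize : E → E) {0}ᶜ :=
  (continuous_norm.continuousOn.inv₀ fun _ hx => norm_ne_zero_iff.mpr hx).smul continuousOn_id

theorem ContinuousOn.comp_normalize {F : Type*} [TopologicalSpace F] {f : E → F}
    (hf : ContinuousOn f (sphere 0 1)) : ContinuousOn (fun y => f (normalize y)) {0}ᶜ :=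
  hf.comp continuousOn_normalize fun _ hy => by simpa using norm_normalize hy

end Shell

variable [InnerProductSpace ℝ E]

section Reflection

theorem inner_reflection_orthogonal_singleton (u x : E) :
    ⟪reflection (ℝ ∙ u)ᗮ x, u⟫ = -⟪x, u⟫ := by
  have h := (reflection (ℝ ∙ u)ᗮ).inner_map_map x u
  rw [reflection_orthogonalComplement_singleton_eq_neg, inner_neg_right] at h
  linarith

theorem reflection_orthogonal_singleton_apply {u : E} (hu : ‖u‖ = 1) (x : E) :
    reflection (ℝ ∙ u)ᗮ x = x - (2 * ⟪x, u⟫) • u := by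
  rw [reflection_orthogonal_apply, reflection_singleton_apply, hu, real_inner_comm]
  simp only [RCLike.ofReal_real_eq_id, id, one_pow, div_one, neg_sub, ← smul_assoc]
  norm_num

theorem reflection_orthogonal_singleton_normalize_sub {x y : E} (hxy : x ≠ y) (h : ‖x‖ = ‖y‖) :
    reflection (ℝ ∙ normalize (x - y))ᗮ x = y := by
  have hK : (ℝ ∙ normalize (x - y)) = ℝ ∙ (x - y) :=
    span_singleton_smul_eq (by simpa [sub_eq_zero] using hxy) _
  simpa only [hK] using reflection_sub h

variable {f : E → ℝ} {u : E}

theorem mul_inner_nonpos_of_le_reflection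
    (hle : ∀ x ∈ sphere (0 : E) 1, 0 ≤ ⟪x, u⟫ → f x ≤ f (reflection (ℝ ∙ u)ᗮ x))
    {x : E} (hx : x ∈ sphere (0 : E) 1) :
    (f x - f (reflection (ℝ ∙ u)ᗮ x)) * ⟪x, u⟫ ≤ 0 := by
  rcases le_or_gt 0 ⟪x, u⟫ with hxu | hxu
  · exact mul_nonpos_of_nonpos_of_nonneg (sub_nonpos.2 (hle x hx hxu)) hxu
  · have hRx := hle (reflection (ℝ ∙ u)ᗮ x) (by simpa using hx)
      (by rw [inner_reflection_orthogonal_singleton]; linarith)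
    rw [reflection_reflection] at hRx
    exact mul_nonpos_of_nonneg_of_nonpos (sub_nonneg.2 hRx) hxu.le

theorem mul_inner_neg_of_lt_reflection {x : E} (hxu : 0 ≤ ⟪x, u⟫)
    (hlt : f x < f (reflection (ℝ ∙ u)ᗮ x)) :
    (f x - f (reflection (ℝ ∙ u)ᗮ x)) * ⟪x, u⟫ < 0 := by
  refine mul_neg_of_neg_of_pos (sub_neg.2 hlt) (hxu.lt_of_ne fun h => hlt.ne ?_)
  rw [(reflection_eq_self_iff x).2 (mem_orthogonal_singleton_iff_inner_right.2 ?_)]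
  rw [real_inner_comm, h]

end Reflection

section RadialMoment

variable [FiniteDimensional ℝ E] [MeasurableSpace E] [BorelSpace E] {f : E → ℝ} {u : E}

theorem LinearIsometryEquiv.setIntegral_shell_comp {F : Type*} [NormedAddCommGroup F]
    [NormedSpace ℝ F] (e : E ≃ₗᵢ[ℝ] E) (g : E → F) :
    ∫ y in shell E, g (e y) = ∫ y in shell E, g y := by
  simpa only [e.preimage_shell] using
    e.measurePreserving.setIntegral_preimage_emb e.toHomeomorph.measurableEmbedding g (shell E)

/-- A positive multiple of the centre of mass of `f` on the sphere. Lebesgue measure on a shell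
stands in for the surface measure: it is invariant under linear isometries, and `normalize` is
continuous on the shell. -/
def radialMoment (f : E → ℝ) : E := ∫ y in shell E, f (normalize y) • y

theorem two_mul_inner_radialMoment (hf : ContinuousOn f (sphere 0 1)) (u : E) :
    2 * ⟪radialMoment f, u⟫ = ∫ y in shell E,
      ‖y‖ * ((f (normalize y) - f (reflection (ℝ ∙ u)ᗮ (normalize y))) * ⟪normalize y, u⟫) := by
  set R := reflection (ℝ ∙ u)ᗮ
  have hfR : ContinuousOn (fun x => f (R x)) (sphere 0 1) :=
    hf.comp R.continuous.continuousOn fun x hx => by simpa [R] using hx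
  have hinner : Continuous fun y : E => ⟪y, u⟫ := continuous_id.inner continuous_const
  have hmoment : ⟪radialMoment f, u⟫ = ∫ y in shell E, f (normalize y) * ⟪y, u⟫ := by
    rw [radialMoment, real_inner_comm,
      ← integral_inner (ContinuousOn.integrableOn_shell (g := fun y => f (normalize y) • y)
        (hf.comp_normalize.smul continuousOn_id))]
    simp_rw [real_inner_smul_right, real_inner_comm]
  have hreflect : ∫ y in shell E, f (normalize y) * ⟪y, u⟫
      = -∫ y in shell E, f (R (normalize y)) * ⟪y, u⟫ := by
    rw [← R.setIntegral_shell_comp (fun y => f (normalize y) * ⟪y, u⟫), ← integral_neg]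
    simp_rw [R.normalize_map, R, inner_reflection_orthogonal_singleton, mul_neg]
  have hscale (y : E) : ⟪y, u⟫ = ‖y‖ * ⟪normalize y, u⟫ := by
    rw [← real_inner_smul_left, norm_smul_normalize]
  calc 2 * ⟪radialMoment f, u⟫
      = (∫ y in shell E, f (normalize y) * ⟪y, u⟫)
          - ∫ y in shell E, f (R (normalize y)) * ⟪y, u⟫ := by
        rw [two_mul, hmoment]
        nth_rw 2 [hreflect]
        ring
    _ = ∫ y in shell E, (f (normalize y) - f (R (normalize y))) * ⟪y, u⟫ := by
        simp_rw [sub_mul]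
        exact (integral_sub (hf.comp_normalize.mul hinner.continuousOn).integrableOn_shell
          (hfR.comp_normalize.mul hinner.continuousOn).integrableOn_shell).symm
    _ = _ := by
        congr 1 with y
        rw [hscale y]
        ring

theorem setIntegral_shell_neg {g : E → ℝ} (hg : ContinuousOn g (sphere 0 1))
    (hg0 : ∀ x ∈ sphere (0 : E) 1, g x ≤ 0) {x₀ : E} (hx₀ : x₀ ∈ sphere (0 : E) 1)
    (hgx₀ : g x₀ < 0) : ∫ y in shell E, ‖y‖ * g (normalize y) < 0 := by
  have hG : ContinuousOn (fun y => -(‖y‖ * g (normalize y))) {0}ᶜ :=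
    (continuous_norm.continuousOn.mul hg.comp_normalize).neg
  have hx₀1 : ‖x₀‖ = 1 := by simpa using hx₀
  set y₀ := (3 / 4 : ℝ) • x₀
  have hy₀ : ‖y₀‖ = 3 / 4 := by simp [y₀, norm_smul, hx₀1]
  have hNy₀ : normalize y₀ = x₀ := by
    rw [normalize_smul_of_pos (by norm_num), normalize_eq_self_of_norm_eq_one hx₀1]
  have hpos := setIntegral_pos_of_continuousAt (μ := volume) measurableSet_shell
    hG.integrableOn_shell
    (fun y hy => neg_nonneg.2 (mul_nonpos_of_nonneg_of_nonpos (norm_nonneg y)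
      (hg0 _ (by simpa using norm_normalize (ne_zero_of_mem_shell hy)))))
    (shell_mem_nhds (by rw [hy₀]; norm_num) (by rw [hy₀]; norm_num))
    (hG.continuousAt (isOpen_compl_singleton.mem_nhds (by simp [← norm_ne_zero_iff, hy₀])))
    (by rw [hNy₀, hy₀]; linarith)
  rw [integral_neg] at hpos
  linarith

theorem inner_radialMoment_neg (hf : ContinuousOn f (sphere 0 1))
    (hle : ∀ x ∈ sphere (0 : E) 1, 0 ≤ ⟪x, u⟫ → f x ≤ f (reflection (ℝ ∙ u)ᗮ x))
    {x₀ : E} (hx₀ : x₀ ∈ sphere (0 : E) 1) (hx₀u : 0 ≤ ⟪x₀, u⟫)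
    (hlt : f x₀ < f (reflection (ℝ ∙ u)ᗮ x₀)) : ⟪radialMoment f, u⟫ < 0 := by
  have hfR : ContinuousOn (fun x => f (reflection (ℝ ∙ u)ᗮ x)) (sphere 0 1) :=
    hf.comp (reflection _).continuous.continuousOn fun x hx => by simpa using hx
  have hint := setIntegral_shell_neg (g := fun x => (f x - f (reflection (ℝ ∙ u)ᗮ x)) * ⟪x, u⟫)
    ((hf.sub hfR).mul (continuous_id.inner continuous_const).continuousOn)
    (fun x hx => mul_inner_nonpos_of_le_reflection hle hx) hx₀
    (mul_inner_neg_of_lt_reflection hx₀u hlt)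
  rw [← two_mul_inner_radialMoment hf u] at hint
  linarith

theorem reflection_le_of_inner_radialMoment_nonneg (hf : ContinuousOn f (sphere 0 1))
    (hsign : ∀ x ∈ sphere (0 : E) 1, ∀ y ∈ sphere (0 : E) 1, 0 ≤ ⟪x, u⟫ → 0 ≤ ⟪y, u⟫ →
      0 ≤ (f x - f (reflection (ℝ ∙ u)ᗮ x)) * (f y - f (reflection (ℝ ∙ u)ᗮ y)))
    (hc : 0 ≤ ⟪radialMoment f, u⟫) {x : E} (hx : x ∈ sphere (0 : E) 1) (hxu : 0 ≤ ⟪x, u⟫) :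
    f (reflection (ℝ ∙ u)ᗮ x) ≤ f x := by
  by_contra! hlt
  have hle : ∀ y ∈ sphere (0 : E) 1, 0 ≤ ⟪y, u⟫ → f y ≤ f (reflection (ℝ ∙ u)ᗮ y) :=
    fun y hy hyu => by nlinarith [hsign x hx y hy hxu hyu]
  exact (inner_radialMoment_neg hf hle hx hxu hlt).not_ge hc

theorem le_of_inner_radialMoment_le (hf : ContinuousOn f (sphere 0 1))
    (hsign : ∀ u : E, ‖u‖ = 1 → ∀ x ∈ sphere (0 : E) 1, ∀ y ∈ sphere (0 : E) 1,
      0 ≤ ⟪x, u⟫ → 0 ≤ ⟪y, u⟫ →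
      0 ≤ (f x - f (reflection (ℝ ∙ u)ᗮ x)) * (f y - f (reflection (ℝ ∙ u)ᗮ y)))
    {x y : E} (hx : x ∈ sphere (0 : E) 1) (hy : y ∈ sphere (0 : E) 1)
    (hxy : ⟪y, radialMoment f⟫ ≤ ⟪x, radialMoment f⟫) : f y ≤ f x := by
  rcases eq_or_ne x y with rfl | hne
  · exact le_rfl
  have hx1 : ‖x‖ = 1 := by simpa using hx
  have hy1 : ‖y‖ = 1 := by simpa using hy
  have hinv : 0 ≤ ‖x - y‖⁻¹ := inv_nonneg.2 (norm_nonneg _)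
  have hc : 0 ≤ ⟪radialMoment f, normalize (x - y)⟫ := by
    rw [NormedSpace.normalize, real_inner_smul_right, inner_sub_right, real_inner_comm x,
      real_inner_comm y]
    exact mul_nonneg hinv (sub_nonneg.2 hxy)
  have hxu : 0 ≤ ⟪x, normalize (x - y)⟫ := by
    rw [NormedSpace.normalize, real_inner_smul_right, inner_sub_right, real_inner_self_eq_norm_sq]
    refine mul_nonneg hinv (sub_nonneg.2 ?_)
    simpa [hx1, hy1] using real_inner_le_norm x y
  simpa [reflection_orthogonal_singleton_normalize_sub hne (hx1.trans hy1.symm)] using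
    reflection_le_of_inner_radialMoment_nonneg hf
      (hsign _ (norm_normalize (sub_ne_zero.2 hne))) hc hx hxu

end RadialMoment

theorem exists_mem_sphere_inner_le_imp [Nontrivial E] (c : E) :
    ∃ p ∈ sphere (0 : E) 1, ∀ x y : E, ⟪y, p⟫ ≤ ⟪x, p⟫ → ⟪y, c⟫ ≤ ⟪x, c⟫ := by
  obtain ⟨p, hp, hcp⟩ : ∃ p : E, ‖p‖ = 1 ∧ c = ‖c‖ • p := by
    rcases eq_or_ne c 0 with rfl | hc
    · simpa using exists_norm_eq E zero_le_one
    · exact ⟨normalize c, norm_normalize hc, (norm_smul_normalize c).symm⟩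
  refine ⟨p, by simpa using hp, fun x y hxy => ?_⟩
  rw [hcp, real_inner_smul_right, real_inner_smul_right]
  exact mul_le_mul_of_nonneg_left hxy (norm_nonneg c)

theorem stmt_6 (n : ℕ) (f : EuclideanSpace ℝ (Fin (n + 1)) → ℝ)
    (hf : ContinuousOn f (sphere (0 : EuclideanSpace ℝ (Fin (n + 1))) 1))
    (h : ∀ u : EuclideanSpace ℝ (Fin (n + 1)), ‖u‖ = 1 →
      ∀ x ∈ sphere (0 : EuclideanSpace ℝ (Fin (n + 1))) 1,
      ∀ y ∈ sphere (0 : EuclideanSpace ℝ (Fin (n + 1))) 1,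
        0 ≤ ⟪x, u⟫ → 0 ≤ ⟪y, u⟫ →
        0 ≤ (f x - f (x - (2 * ⟪x, u⟫) • u)) * (f y - f (y - (2 * ⟪y, u⟫) • u))) :
    ∃ p ∈ sphere (0 : EuclideanSpace ℝ (Fin (n + 1))) 1,
      ∃ φ : ℝ → ℝ, MonotoneOn φ (Icc (-1 : ℝ) 1) ∧
        ∀ x ∈ sphere (0 : EuclideanSpace ℝ (Fin (n + 1))) 1, f x = φ ⟪x, p⟫ := by
  have hsign : ∀ u : EuclideanSpace ℝ (Fin (n + 1)), ‖u‖ = 1 → ∀ x ∈ sphere 0 1,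
      ∀ y ∈ sphere 0 1, 0 ≤ ⟪x, u⟫ → 0 ≤ ⟪y, u⟫ →
      0 ≤ (f x - f (reflection (ℝ ∙ u)ᗮ x)) * (f y - f (reflection (ℝ ∙ u)ᗮ y)) := by
    intro u hu
    simpa only [reflection_orthogonal_singleton_apply hu] using h u hu
  obtain ⟨p, hp, hpc⟩ := exists_mem_sphere_inner_le_imp (radialMoment f)
  obtain ⟨φ, hφ, hfφ⟩ := exists_monotoneOn_comp_eq (g := fun x => ⟪x, p⟫) (a := -1)
    ((isCompact_sphere 0 1).bddAbove_image hf)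
    (fun x hx y hy hxy => le_of_inner_radialMoment_le hf hsign hx hy (hpc x y hxy))
    ⟨-p, by simpa using hp, by simp [(by simpa using hp : ‖p‖ = 1)]⟩
  exact ⟨p, hp, φ, hφ.mono Icc_subset_Ici_self, hfφ⟩
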